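/- If a strategy profile σ is minimax rationalizable, witnessed by sets Z_1, ..., Z_n, then Z_i ⊆ NSD_i^k(Γ) for every player i and every k; hence σ ∈ NSD^∞(Γ). Combined with the converse, a profile survives iterated deletion of minimax dominated strategies if and only if it is minimax rationalizable. -/

import Mathlib

open Function

section
variable {ι : Type*} [DecidableEq ι] {S : ι → Type*}

noncomputable def minv (u : ι → (∀ j, S j) → ℝ) (i : ι) (T : Set (∀ j, S j)) (σ : S i) : ℝ :=
  sInf ((fun τ => u i (Function.update τ i σ)) '' T)

noncomputable def maxv (u : ι → (∀ j, S j) → ℝ) (i : ι) (T : Set (∀ j, S j)) (σ : S i) : ℝ :=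
  sSup ((fun τ => u i (Function.update τ i σ)) '' T)

/-- `σ'` minimax dominates `σ` for player `i` w.r.t. opponent profile set `T`. -/
def MMDomBy (u : ι → (∀ j, S j) → ℝ) (i : ι) (T : Set (∀ j, S j)) (σ σ' : S i) : Prop :=
  minv u i T σ' > maxv u i T σ

def MMDom (u : ι → (∀ j, S j) → ℝ) (i : ι) (T : Set (∀ j, S j)) (σ : S i) : Prop :=
  ∃ σ' : S i, MMDomBy u i T σ σ'

/-- Opponent profiles of player `i` compatible with the product set `Z`. -/
def Opp (Z : ∀ j, Set (S j)) (i : ι) : Set (∀ j, S j) := {τ | ∀ j, j ≠ i → τ j ∈ Z j}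

/-- Iterated deletion of minimax dominated strategies. -/
noncomputable def NSD (u : ι → (∀ j, S j) → ℝ) : ℕ → ∀ i, Set (S i)
  | 0, _ => Set.univ
  | (k+1), i => {σ ∈ NSD u k i | ¬ MMDom u i (Opp (NSD u k) i) σ}


/-- `σ` is minimax rationalizable. -/
def MMRat {ι : Type*} [DecidableEq ι] {S : ι → Type*}
    (u : ι → (∀ j, S j) → ℝ) (σ : ∀ j, S j) : Prop :=
  ∃ Z : ∀ i, Set (S i), (∀ i, (Z i).Nonempty) ∧ (∀ i, σ i ∈ Z i) ∧
    ∀ i, ∀ σ' ∈ Z i, ∀ σ'' : S i, maxv u i (Opp Z i) σ' ≥ minv u i (Opp Z i) σ''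

/-!
Shrinking the set of opponent profiles lowers maximal and raises minimal payoffs, so minimax
dominance with respect to a set persists for every nonempty subset. Hence a witness family `Z`
survives each deletion round: a strategy in `Z i` dominated with respect to `NSD k ⊇ Z` would be
dominated with respect to `Z` itself. Conversely, `NSD` is an antitone sequence in a finite
order, so it reaches a fixed point `NSD K`; a maximiser of the worst-case payoff is never
dominated, so `NSD K` is nonempty, and being a fixed point of deletion it witnesses the minimax
rationalizability of every profile that survives.
-/

theorem opp_mono {ι : Type*} {S : ι → Type*} {Z Z' : ∀ j, Set (S j)} (h : Z ≤ Z')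
    (i : ι) : Opp Z i ⊆ Opp Z' i :=
  fun _ hτ j hj => h j (hτ j hj)

theorem opp_nonempty {ι : Type*} {S : ι → Type*} {Z : ∀ j, Set (S j)} (h : ∀ j, (Z j).Nonempty)
    (i : ι) : (Opp Z i).Nonempty :=
  ⟨fun j => (h j).some, fun j _ => (h j).some_mem⟩

section

variable {u : ι → (∀ j, S j) → ℝ} {i : ι} {T T' : Set (∀ j, S j)}

theorem maxv_mono (hT : T.Nonempty) (hT' : T'.Finite) (h : T ⊆ T') (s : S i) :
    maxv u i T s ≤ maxv u i T' s :=
  csSup_le_csSup (hT'.image _).bddAbove (hT.image _) (Set.image_mono h)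

theorem minv_anti (hT : T.Nonempty) (hT' : T'.Finite) (h : T ⊆ T') (s : S i) :
    minv u i T' s ≤ minv u i T s :=
  csInf_le_csInf (hT'.image _).bddBelow (hT.image _) (Set.image_mono h)

theorem minv_le_maxv (hT : T.Nonempty) (hT' : T.Finite) (s : S i) :
    minv u i T s ≤ maxv u i T s :=
  csInf_le_csSup (hT.image _) (hT'.image _).bddBelow (hT'.image _).bddAbove

theorem not_mmDom_iff {s : S i} : ¬ MMDom u i T s ↔ ∀ s', minv u i T s' ≤ maxv u i T s := by
  simp [MMDom, MMDomBy]

theorem MMDom.anti {s : S i} (hT : T.Nonempty) (hT' : T'.Finite) (h : T ⊆ T')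
    (hdom : MMDom u i T' s) : MMDom u i T s :=
  let ⟨s', hs'⟩ := hdom
  ⟨s', (maxv_mono hT hT' h s).trans_lt (hs'.trans_le (minv_anti hT hT' h s'))⟩

theorem exists_not_mmDom [Finite (S i)] [Nonempty (S i)] (hT : T.Nonempty) (hT' : T.Finite) :
    ∃ s : S i, ¬ MMDom u i T s := by
  obtain ⟨s, hs⟩ := Finite.exists_max (minv u i T)
  exact ⟨s, not_mmDom_iff.2 fun s' => (hs s').trans (minv_le_maxv hT hT' s)⟩

end

section

variable (u : ι → (∀ j, S j) → ℝ)

theorem mem_nsd_succ {k : ℕ} {i : ι} {s : S i} :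
    s ∈ NSD u (k + 1) i ↔ s ∈ NSD u k i ∧ ¬ MMDom u i (Opp (NSD u k) i) s :=
  Iff.rfl

theorem nsd_antitone : Antitone (NSD u) :=
  antitone_nat_of_succ_le fun _ _ _ hs => hs.1

variable [Finite ι] [∀ j, Finite (S j)]

theorem subset_nsd {Z : ∀ j, Set (S j)} (hne : ∀ j, (Z j).Nonempty)
    (hZ : ∀ i, ∀ s ∈ Z i, ∀ s', maxv u i (Opp Z i) s ≥ minv u i (Opp Z i) s') :
    ∀ k, Z ≤ NSD u k := by
  intro k
  induction k with
  | zero => exact fun _ _ _ => trivial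
  | succ k ih =>
    intro i s hs
    exact ⟨ih i hs, fun hdom => not_mmDom_iff.2 (hZ i s hs)
      (hdom.anti (opp_nonempty hne i) (Set.toFinite _) (opp_mono ih i))⟩

theorem mem_nsd_succ_of_not_mmDom {k : ℕ} {i : ι} {s : S i} (hk : ∀ j, (NSD u k j).Nonempty)
    (hs : ¬ MMDom u i (Opp (NSD u k) i) s) : s ∈ NSD u (k + 1) i := by
  suffices ∀ m ≤ k + 1, s ∈ NSD u m i from this _ le_rfl
  intro m hm
  induction m with
  | zero => trivial
  | succ m ih =>
    have hsub : Opp (NSD u k) i ⊆ Opp (NSD u m) i := opp_mono (nsd_antitone u (by omega)) i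
    exact ⟨ih (by omega), fun hdom => hs (hdom.anti (opp_nonempty hk i) (Set.toFinite _) hsub)⟩

theorem nsd_nonempty [∀ j, Nonempty (S j)] : ∀ k i, (NSD u k i).Nonempty := by
  intro k
  induction k with
  | zero => exact fun _ => Set.univ_nonempty
  | succ k ih =>
    intro i
    obtain ⟨s, hs⟩ := exists_not_mmDom (u := u) (opp_nonempty ih i) (Set.toFinite _)
    exact ⟨s, mem_nsd_succ_of_not_mmDom u ih hs⟩

theorem exists_nsd_succ_eq : ∃ K, NSD u (K + 1) = NSD u K :=
  let ⟨K, hK⟩ := WellFoundedLT.antitone_chain_condition (nsd_antitone u)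
  ⟨K, (hK (K + 1) K.le_succ).symm⟩

theorem MMRat.forall_mem_nsd {τ : ∀ j, S j} (h : MMRat u τ) : ∀ i, τ i ∈ ⋂ k, NSD u k i :=
  let ⟨_, hne, hτ, hZ⟩ := h
  fun i => Set.mem_iInter.2 fun k => subset_nsd u hne hZ k i (hτ i)

theorem mmRat_of_forall_mem_nsd [∀ j, Nonempty (S j)] {τ : ∀ j, S j}
    (hτ : ∀ i, τ i ∈ ⋂ k, NSD u k i) : MMRat u τ := by
  obtain ⟨K, hK⟩ := exists_nsd_succ_eq u
  refine ⟨NSD u K, nsd_nonempty u K, fun i => Set.mem_iInter.1 (hτ i) K, fun i s hs => ?_⟩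
  rw [← hK] at hs
  exact not_mmDom_iff.1 ((mem_nsd_succ u).1 hs).2

end

variable {ι : Type*} [Fintype ι] [DecidableEq ι] {S : ι → Type*}
  [∀ i, Fintype (S i)] [∀ i, Nonempty (S i)]

theorem minimax_rationalizable_subset_nsd_general (u : ι → (∀ j, S j) → ℝ)
    (Z : ∀ i, Set (S i)) (hne : ∀ i, (Z i).Nonempty)
    (hprop : ∀ i, ∀ σ' ∈ Z i, ∀ σ'' : S i,
      maxv u i (Opp Z i) σ' ≥ minv u i (Opp Z i) σ'') :
    (∀ (i : ι) (k : ℕ), Z i ⊆ NSD u k i) ∧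
    (∀ τ : ∀ j, S j, MMRat u τ ↔ ∀ i, τ i ∈ ⋂ k, NSD u k i) :=
  ⟨fun i k => subset_nsd u hne hprop k i,
    fun _ => ⟨MMRat.forall_mem_nsd u, mmRat_of_forall_mem_nsd u⟩⟩

theorem minimax_rationalizable_subset_nsd (u : ι → (∀ j, S j) → ℝ) (σ : ∀ j, S j)
    (Z : ∀ i, Set (S i)) (hne : ∀ i, (Z i).Nonempty) (hσ : ∀ i, σ i ∈ Z i)
    (hprop : ∀ i, ∀ σ' ∈ Z i, ∀ σ'' : S i,
      maxv u i (Opp Z i) σ' ≥ minv u i (Opp Z i) σ'') :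
    (∀ (i : ι) (k : ℕ), Z i ⊆ NSD u k i) ∧
    (∀ τ : ∀ j, S j, MMRat u τ ↔ ∀ i, τ i ∈ ⋂ k, NSD u k i) :=
  minimax_rationalizable_subset_nsd_general u Z hne hprop

end
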